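/- arXiv:1508.07918 — 8 statements merged into one kernel-verified Lean document; each statement's English description precedes it below -/
import Mathlib

section
/- For t ≥ 2, the maximum over all subsets B = {x_1,...,x_k} of {1,...,t-1} with no two elements differing by 1, of the quantity (sum of elements of B) - C(|B|,2), equals floor((1/3)·C(t+1,2)), where C(n,k) denotes the binomial coefficient. -/
/-- The set of "nice" subsets of {1,...,t-1}: no two elements differ by exactly 1. -/
def niceSets (t : ℕ) : Finset (Finset ℕ) :=
  (Finset.Icc 1 (t - 1)).powerset.filter (fun B => ∀ x ∈ B, x + 1 ∉ B)

/-- The weight of a finite set of naturals: (Σ x) - C(|B|,2). -/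
def weight (B : Finset ℕ) : ℤ := (∑ x ∈ B, (x : ℤ)) - (B.card.choose 2 : ℤ)

lemma two_choose_two (k : ℕ) : (2 * k.choose 2 : ℤ) = (k : ℤ) * ((k : ℤ) - 1) := by
  cases k with
  | zero => simp
  | succ n =>
    have h : (n + 1).choose 2 = (n + 1) * n / 2 := by
      rw [Nat.choose_two_right]; simp
    have hdvd : 2 ∣ (n + 1) * n := by
      rw [mul_comm]
      exact (Nat.even_mul_succ_self n).two_dvd
    have h2 : 2 * ((n + 1) * n / 2) = (n + 1) * n := Nat.mul_div_cancel' hdvd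
    rw [h]
    have h3 := congrArg (fun x : ℕ => (x : ℤ)) h2
    push_cast at h3 ⊢
    linarith [h3]

/-- Sum bound: a nice subset of [1,m] with k elements has sum ≤ k*m - k*(k-1). -/
lemma sum_bound : ∀ m : ℕ, ∀ B : Finset ℕ, B ⊆ Finset.Icc 1 m →
    (∀ x ∈ B, x + 1 ∉ B) →
    (∑ x ∈ B, (x : ℤ)) ≤ (B.card : ℤ) * m - (B.card : ℤ) * ((B.card : ℤ) - 1) := by
  intro m
  induction m using Nat.strong_induction_on with
  | _ m ih =>
    intro B hsub hnice
    match m with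
    | 0 =>
      have hB : B = ∅ := by
        rw [Finset.eq_empty_iff_forall_notMem]
        intro x hx
        have h := hsub hx
        rw [Finset.mem_Icc] at h
        omega
      simp [hB]
    | (m + 1) =>
      by_cases hm : (m + 1) ∈ B
      · -- remove the top element
        set B' := B.erase (m + 1) with hB'
        have hsub' : B' ⊆ Finset.Icc 1 (m - 1) := by
          intro x hx
          have hxB : x ∈ B := Finset.mem_of_mem_erase hx
          have hxne : x ≠ m + 1 := Finset.ne_of_mem_erase hx
          have hxI := hsub hxB
          simp [Finset.mem_Icc] at hxI ⊢
          have hxnm : x ≠ m := by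
            intro h
            apply hnice x hxB
            rw [h]
            exact hm
          omega
        have hnice' : ∀ x ∈ B', x + 1 ∉ B' := by
          intro x hx hx1
          exact hnice x (Finset.mem_of_mem_erase hx) (Finset.mem_of_mem_erase hx1)
        have hIH := ih (m - 1) (by omega) B' hsub' hnice'
        have hcard : B.card = B'.card + 1 := by
          rw [hB', Finset.card_erase_of_mem hm]
          have : 1 ≤ B.card := Finset.card_pos.mpr ⟨m + 1, hm⟩
          omega
        have hsum : (∑ x ∈ B, (x : ℤ)) = (∑ x ∈ B', (x : ℤ)) + (m + 1 : ℤ) := by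
          rw [hB']
          rw [← Finset.sum_erase_add B _ hm]
          push_cast
          ring
        have hcm1 : ((m - 1 : ℕ) : ℤ) ≤ (m : ℤ) - 1 ∨ B'.card = 0 := by
          match m with
          | 0 =>
            right
            have : B' ⊆ Finset.Icc 1 0 := by simpa using hsub'
            simp [Finset.Icc_eq_empty_of_lt] at this
            have : B' = ∅ := Finset.subset_empty.mp (by simpa using this)
            simp [this]
          | (m + 1) => left; push_cast; omega
        rcases hcm1 with hc | hc
        · have hk0 : (0 : ℤ) ≤ (B'.card : ℤ) := by positivity
          rw [hsum, hcard]
          push_cast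
          nlinarith [hIH]
        · have hB'e : (∑ x ∈ B', (x : ℤ)) = 0 := by
            have : B' = ∅ := Finset.card_eq_zero.mp hc
            simp [this]
          rw [hsum, hcard, hc, hB'e]
          push_cast
          nlinarith []
      · -- top element not in B
        have hsub' : B ⊆ Finset.Icc 1 m := by
          intro x hx
          have hxI := hsub hx
          simp [Finset.mem_Icc] at hxI ⊢
          have : x ≠ m + 1 := fun h => hm (h ▸ hx)
          omega
        have hIH := ih m (by omega) B hsub' hnice
        have hk0 : (0 : ℤ) ≤ (B.card : ℤ) := by positivity
        push_cast
        nlinarith [hIH]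

/-- Upper bound for the weight of any nice set. -/
lemma weight_upper (t : ℕ) (ht : 2 ≤ t) (B : Finset ℕ) (hB : B ∈ niceSets t) :
    6 * weight B ≤ (t : ℤ) * ((t : ℤ) + 1) := by
  simp only [niceSets, Finset.mem_filter, Finset.mem_powerset] at hB
  obtain ⟨hsub, hnice⟩ := hB
  have hsum := sum_bound (t - 1) B hsub hnice
  have ht1 : ((t - 1 : ℕ) : ℤ) = (t : ℤ) - 1 := by omega
  rw [ht1] at hsum
  have h2c := two_choose_two B.card
  set k : ℤ := (B.card : ℤ) with hk
  have hd : (0 : ℤ) ≤ ((t : ℤ) - 3 * k) * ((t : ℤ) - 3 * k + 1) := by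
    rcases le_or_gt 0 ((t : ℤ) - 3 * k) with h | h
    · positivity
    · have h1 : (0 : ℤ) ≤ -((t : ℤ) - 3 * k) := by omega
      have h2 : (0 : ℤ) ≤ -((t : ℤ) - 3 * k + 1) := by omega
      nlinarith [mul_nonneg h1 h2]
  unfold weight
  nlinarith [hsum, h2c, hd]

lemma choose_div_eq (t : ℕ) : (t + 1).choose 2 / 3 = (t + 1) * t / 6 := by
  rw [Nat.choose_two_right]
  simp only [Nat.add_sub_cancel]
  rw [Nat.div_div_eq_div_mul]

/-- The maximum of the weight (Σ x) - C(|B|,2) over nice subsets B of {1,...,t-1}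
is ⌊C(t+1,2)/3⌋. -/
theorem nice_max_weight (t : ℕ) (ht : 2 ≤ t) :
    IsGreatest {w : ℤ | ∃ B ∈ niceSets t, weight B = w} (((t + 1).choose 2 / 3 : ℕ) : ℤ) := by
  constructor
  · -- membership: the witness {t-1, t-3, ..., t+1-2k} with k = (t+1)/3
    set k : ℕ := (t + 1) / 3 with hkdef
    have hk3 : 3 * k ≤ t + 1 ∧ t + 1 < 3 * k + 3 := by omega
    have h2k : 2 * k ≤ t := by omega
    have hk1 : 1 ≤ k := by omega
    set Bw : Finset ℕ := (Finset.range k).image (fun i => t - 1 - 2 * i) with hBw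
    have hinj : ∀ i ∈ Finset.range k, ∀ j ∈ Finset.range k,
        t - 1 - 2 * i = t - 1 - 2 * j → i = j := by
      intro i hi j hj h
      simp [Finset.mem_range] at hi hj
      omega
    have hmem : Bw ∈ niceSets t := by
      simp only [niceSets, Finset.mem_filter, Finset.mem_powerset]
      constructor
      · intro x hx
        simp only [hBw, Finset.mem_image, Finset.mem_range] at hx
        obtain ⟨i, hi, rfl⟩ := hx
        simp [Finset.mem_Icc]
        omega
      · intro x hx hx1
        simp only [hBw, Finset.mem_image, Finset.mem_range] at hx hx1
        obtain ⟨i, hi, rfl⟩ := hx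
        obtain ⟨j, hj, hji⟩ := hx1
        omega
    have hcard : Bw.card = k := by
      rw [hBw, Finset.card_image_of_injOn hinj, Finset.card_range]
    have hsum : (∑ x ∈ Bw, (x : ℤ)) = (k : ℤ) * ((t : ℤ) - 1) - (k : ℤ) * ((k : ℤ) - 1) := by
      rw [hBw, Finset.sum_image hinj]
      have hcongr : ∀ i ∈ Finset.range k,
          ((t - 1 - 2 * i : ℕ) : ℤ) = (t : ℤ) - 1 - 2 * (i : ℤ) := by
        intro i hi
        simp [Finset.mem_range] at hi
        omega
      rw [Finset.sum_congr rfl hcongr]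
      have hG : (2 : ℤ) * (∑ i ∈ Finset.range k, (i : ℤ)) = (k : ℤ) * ((k : ℤ) - 1) := by
        have h := Finset.sum_range_id_mul_two k
        have hcast : ((∑ i ∈ Finset.range k, i : ℕ) : ℤ) = ∑ i ∈ Finset.range k, (i : ℤ) := by
          push_cast; rfl
        have := congrArg (fun n : ℕ => (n : ℤ)) h
        push_cast at this
        rw [Nat.cast_sub hk1] at this
        push_cast at this
        linarith [this]
      simp only [Finset.sum_sub_distrib, Finset.sum_const, Finset.card_range, nsmul_eq_mul,
        mul_one, ← Finset.mul_sum]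
      linarith [hG]
    refine ⟨Bw, hmem, ?_⟩
    have h2c := two_choose_two Bw.card
    rw [hcard] at h2c
    have hkey : 6 * weight Bw = (t : ℤ) * ((t : ℤ) + 1)
        - ((t : ℤ) - 3 * (k : ℤ)) * ((t : ℤ) - 3 * (k : ℤ) + 1) := by
      unfold weight
      rw [hsum, hcard]
      nlinarith [h2c]
    have hd : (t : ℤ) - 3 * (k : ℤ) = -1 ∨ (t : ℤ) - 3 * (k : ℤ) = 0 ∨
        (t : ℤ) - 3 * (k : ℤ) = 1 := by omega
    have hC : (t + 1).choose 2 / 3 = (t + 1) * t / 6 := choose_div_eq t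
    rw [hC]
    have hn : ((t + 1) * t : ℕ) = t * (t + 1) := by ring
    rw [hn]
    set n : ℕ := t * (t + 1) with hndef
    have hnc : ((n : ℕ) : ℤ) = (t : ℤ) * ((t : ℤ) + 1) := by push_cast [hndef]; ring
    rcases hd with h | h | h <;> rw [h] at hkey <;> norm_num at hkey <;> omega
  · -- upper bound
    rintro w ⟨B, hB, rfl⟩
    have hkey := weight_upper t ht B hB
    have hC : (t + 1).choose 2 / 3 = (t + 1) * t / 6 := choose_div_eq t
    rw [hC]
    have hn : ((t + 1) * t : ℕ) = t * (t + 1) := by ring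
    rw [hn]
    set n : ℕ := t * (t + 1) with hndef
    have hnc : ((n : ℕ) : ℤ) = (t : ℤ) * ((t : ℤ) + 1) := by push_cast [hndef]; ring
    omega
end

section
/- For t ≥ 2, the number of nice subsets B of {1,...,t-1} achieving the maximal weight (Σ_{x∈B} x) - C(|B|,2) = floor((1/3)·C(t+1,2)) is 2 if t ≡ 1 (mod 3) and 1 otherwise. -/
/-!
Write a nice set `B` of size `k` as `b₁ > b₂ > ⋯ > b_k`. Consecutive elements differ by at least
`2`, so `b_i ≤ (t - 1) - 2 (i - 1)` and `∑ B ≤ k (t - 1) - k (k - 1)`, with equality only for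
`{t - 1, t - 3, …, t - 2k + 1}`. Hence `6 · weight B ≤ t (t + 1) - (t - 3k) (t - 3k + 1)`, while
`6 ⌊C(t + 1, 2) / 3⌋ = t (t + 1) - (t (t + 1) mod 6)`. Among integers `d ≡ t (mod 3)` the product
`d (d + 1)` attains its least value `t (t + 1) mod 6` at one `d ∈ {0, -1}` when `t ≢ 1 (mod 3)`,
and at both `d = 1` and `d = -2` when `t ≡ 1 (mod 3)`: one optimal size `k = (t - d) / 3`, or two.
-/

open Finset

def IsNice (B : Finset ℕ) : Prop := ∀ x ∈ B, x + 1 ∉ B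

lemma IsNice.mono {B C : Finset ℕ} (hB : IsNice B) (hCB : C ⊆ B) : IsNice C :=
  fun x hx hx1 => hB x (hCB hx) (hCB hx1)

lemma mem_niceSets {t : ℕ} {B : Finset ℕ} : B ∈ niceSets t ↔ B ⊆ Icc 1 (t - 1) ∧ IsNice B := by
  rw [niceSets, mem_filter, mem_powerset, IsNice]

lemma IsNice.add_two_le_of_insert {a : ℕ} {s : Finset ℕ} (h : IsNice (insert a s))
    (hs : ∀ x ∈ s, x < a) : ∀ x ∈ s, x + 2 ≤ a := by
  intro x hx
  have : x + 1 ≠ a := fun hxa => h x (mem_insert_of_mem hx) (hxa ▸ mem_insert_self a s)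
  have := hs x hx
  omega

lemma IsNice.sum_add_le {B : Finset ℕ} (hB : IsNice B) {N : ℤ} (hBN : ∀ x ∈ B, (x : ℤ) ≤ N) :
    ∑ x ∈ B, (x : ℤ) + #B * (#B - 1) ≤ #B * N := by
  induction B using Finset.induction_on_max generalizing N with
  | empty => simp
  | insert a s hs ih =>
    have has : a ∉ s := fun h => (hs a h).false
    have hgap := hB.add_two_le_of_insert hs
    have hs_le := ih (hB.mono (subset_insert a s)) (N := a - 2)
      (fun x hx => by have := hgap x hx; omega)
    have ha : (#s + 1 : ℤ) * a ≤ (#s + 1) * N :=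
      mul_le_mul_of_nonneg_left (hBN a (mem_insert_self a s)) (by positivity)
    rw [sum_insert has, card_insert_of_notMem has]
    push_cast
    linarith

def topNiceSet (n k : ℕ) : Finset ℕ := (range k).image (fun i => n - 2 * i)

lemma topNiceSet_succ (n k : ℕ) : topNiceSet n (k + 1) = insert n (topNiceSet (n - 2) k) := by
  ext x
  simp only [topNiceSet, mem_image, mem_range, mem_insert]
  constructor
  · rintro ⟨_ | i, hi, rfl⟩
    · exact Or.inl rfl
    · exact Or.inr ⟨i, by omega, by omega⟩
  · rintro (rfl | ⟨i, hi, rfl⟩)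
    · exact ⟨0, by omega, by omega⟩
    · exact ⟨i + 1, by omega, by omega⟩

section topNiceSet

variable {n k : ℕ}

lemma topNiceSet_subset_Icc (h : 2 * k ≤ n + 1) : topNiceSet n k ⊆ Icc 1 n := by
  intro x hx
  obtain ⟨i, hi, rfl⟩ := mem_image.mp hx
  rw [mem_range] at hi
  exact mem_Icc.mpr ⟨by omega, by omega⟩

lemma isNice_topNiceSet (h : 2 * k ≤ n + 1) : IsNice (topNiceSet n k) := by
  intro x hx hx1
  obtain ⟨i, hi, rfl⟩ := mem_image.mp hx
  obtain ⟨j, hj, hji⟩ := mem_image.mp hx1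
  rw [mem_range] at hi hj
  omega

lemma injOn_topNiceSet (h : 2 * k ≤ n + 1) : Set.InjOn (fun i => n - 2 * i) (range k) := by
  intro i hi j hj hij
  rw [coe_range, Set.mem_Iio] at hi hj
  simp only at hij
  omega

lemma card_topNiceSet (h : 2 * k ≤ n + 1) : #(topNiceSet n k) = k := by
  rw [topNiceSet, card_image_of_injOn (injOn_topNiceSet h), card_range]

lemma sum_topNiceSet_add (h : 2 * k ≤ n + 1) :
    ∑ x ∈ topNiceSet n k, (x : ℤ) + k * (k - 1) = k * n := by
  rw [topNiceSet, sum_image (injOn_topNiceSet h)]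
  induction k with
  | zero => simp
  | succ k ih =>
    rw [sum_range_succ]
    have := ih (by omega)
    push_cast [show 2 * k ≤ n by omega] at this ⊢
    linear_combination this

end topNiceSet

lemma IsNice.eq_topNiceSet_of_sum_add_eq {B : Finset ℕ} (hB : IsNice B) {n : ℕ}
    (hBn : ∀ x ∈ B, x ≤ n) (h : ∑ x ∈ B, (x : ℤ) + #B * (#B - 1) = #B * n) :
    B = topNiceSet n #B := by
  induction B using Finset.induction_on_max generalizing n with
  | empty => rfl
  | insert a s hs ih =>
    have has : a ∉ s := fun h => (hs a h).false
    have hgap := hB.add_two_le_of_insert hs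
    have hs_nice := hB.mono (subset_insert a s)
    have hs_le := hs_nice.sum_add_le (N := a - 2) (fun x hx => by have := hgap x hx; omega)
    have han : a ≤ n := hBn a (mem_insert_self a s)
    rw [sum_insert has, card_insert_of_notMem has] at h
    push_cast at h
    -- the bound for `s` below `a - 2` leaves no room: `a = n` and `s` is extremal below `n - 2`
    have hna : n = a := by
      by_contra hne
      have : (#s + 1 : ℤ) * (a + 1) ≤ (#s + 1) * n :=
        mul_le_mul_of_nonneg_left (by omega) (by positivity)
      linarith
    subst hna
    have hcast : (#s : ℤ) * ((n - 2 : ℕ) : ℤ) = #s * (n - 2) := by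
      rcases s.eq_empty_or_nonempty with rfl | ⟨x, hx⟩
      · simp
      · have := hgap x hx
        push_cast [show 2 ≤ n by omega]
        ring
    have hs_eq := ih hs_nice (n := n - 2) (fun x hx => by have := hgap x hx; omega)
      (by rw [hcast]; linarith)
    rw [card_insert_of_notMem has, topNiceSet_succ, ← hs_eq]

lemma two_mul_cast_choose_two (k : ℕ) : 2 * (k.choose 2 : ℤ) = k * (k - 1) := by
  rw [Nat.choose_two_right]
  rcases k with _ | k
  · simp
  · have h := Nat.two_mul_div_two_of_even (Nat.even_mul_pred_self (k + 1))
    rw [Nat.add_sub_cancel] at h ⊢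
    rw [← Nat.cast_two (R := ℤ), ← Nat.cast_mul, h]
    push_cast
    ring

def weightDeficit (t k : ℕ) : ℤ := ((t : ℤ) - 3 * k) * ((t : ℤ) - 3 * k + 1)

lemma six_mul_weight_add_weightDeficit_le {t : ℕ} {B : Finset ℕ} (hB : B ∈ niceSets t) :
    6 * weight B + weightDeficit t #B ≤ t * (t + 1) := by
  obtain ⟨hBt, hB⟩ := mem_niceSets.mp hB
  have hsum := hB.sum_add_le (N := (t : ℤ) - 1) fun x hx => by
    have := mem_Icc.mp (hBt hx)
    omega
  have := two_mul_cast_choose_two #B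
  rw [weight, weightDeficit]
  linarith

lemma eq_topNiceSet_of_six_mul_weight_add_weightDeficit_eq {t : ℕ} (ht : 1 ≤ t)
    {B : Finset ℕ} (hB : B ∈ niceSets t) (h : 6 * weight B + weightDeficit t #B = t * (t + 1)) :
    B = topNiceSet (t - 1) #B := by
  obtain ⟨hBt, hB⟩ := mem_niceSets.mp hB
  refine hB.eq_topNiceSet_of_sum_add_eq (fun x hx => (mem_Icc.mp (hBt hx)).2) ?_
  have := two_mul_cast_choose_two #B
  rw [weight, weightDeficit] at h
  push_cast [ht]
  linarith

lemma six_mul_weight_topNiceSet_add_weightDeficit {t k : ℕ} (ht : 1 ≤ t) (hk : 2 * k ≤ t) :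
    6 * weight (topNiceSet (t - 1) k) + weightDeficit t k = t * (t + 1) := by
  have hsum := sum_topNiceSet_add (n := t - 1) (k := k) (by omega)
  have := two_mul_cast_choose_two k
  rw [weight, weightDeficit, card_topNiceSet (by omega)]
  push_cast [ht] at hsum
  linarith

lemma six_mul_choose_two_div_three_add (t : ℕ) :
    6 * ((t + 1).choose 2 / 3) + t * (t + 1) % 6 = t * (t + 1) := by
  rw [Nat.choose_two_right, Nat.add_sub_cancel, Nat.div_div_eq_div_mul, mul_comm (t + 1) t]
  exact Nat.div_add_mod _ 6

lemma mul_succ_mod_six (t : ℕ) : t * (t + 1) % 6 = if t % 3 = 1 then 2 else 0 := by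
  have := Nat.mod_lt t (show 0 < 6 by norm_num)
  have h3 : t % 3 = t % 6 % 3 := (Nat.mod_mod_of_dvd t (by norm_num)).symm
  rw [Nat.mul_mod, Nat.add_mod, h3]
  interval_cases t % 6 <;> rfl

def optimalSizes (t : ℕ) : Finset ℕ := if t % 3 = 1 then {t / 3, t / 3 + 1} else {(t + 1) / 3}

lemma card_optimalSizes (t : ℕ) : #(optimalSizes t) = if t % 3 = 1 then 2 else 1 := by
  unfold optimalSizes
  split_ifs
  · exact card_pair (by omega)
  · exact card_singleton _

lemma two_mul_le_of_mem_optimalSizes {t k : ℕ} (ht : 2 ≤ t) (hk : k ∈ optimalSizes t) :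
    2 * k ≤ t := by
  unfold optimalSizes at hk
  split_ifs at hk <;> simp only [mem_insert, mem_singleton] at hk <;> omega

lemma mul_add_one_eq_two_iff (d : ℤ) : d * (d + 1) = 2 ↔ d = 1 ∨ d = -2 := by
  rw [← sub_eq_zero, show d * (d + 1) - 2 = (d - 1) * (d + 2) by ring, mul_eq_zero]
  omega

lemma mul_succ_mod_six_le_weightDeficit (t k : ℕ) :
    ((t * (t + 1) % 6 : ℕ) : ℤ) ≤ weightDeficit t k := by
  rw [mul_succ_mod_six, weightDeficit]
  set d : ℤ := t - 3 * k with hd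
  rcases (by omega : d = 0 ∨ d = -1 ∨ 1 ≤ d ∨ d ≤ -2) with h | h | h | h
  · rw [if_neg (by omega), h]; norm_num
  · rw [if_neg (by omega), h]; norm_num
  all_goals split_ifs <;> push_cast <;> nlinarith

lemma weightDeficit_eq_mul_succ_mod_six_iff (t k : ℕ) :
    weightDeficit t k = ((t * (t + 1) % 6 : ℕ) : ℤ) ↔ k ∈ optimalSizes t := by
  rw [mul_succ_mod_six, weightDeficit, optimalSizes]
  split_ifs
  · rw [Nat.cast_ofNat, mul_add_one_eq_two_iff, mem_insert, mem_singleton]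
    omega
  · rw [Nat.cast_zero, mul_eq_zero, mem_singleton]
    omega

lemma mem_niceSets_and_weight_eq_iff {t : ℕ} (ht : 2 ≤ t) {B : Finset ℕ} :
    B ∈ niceSets t ∧ weight B = (((t + 1).choose 2 / 3 : ℕ) : ℤ) ↔
      ∃ k ∈ optimalSizes t, topNiceSet (t - 1) k = B := by
  have hmax : 6 * (((t + 1).choose 2 / 3 : ℕ) : ℤ) + ((t * (t + 1) % 6 : ℕ) : ℤ) = t * (t + 1) := by
    exact_mod_cast six_mul_choose_two_div_three_add t
  constructor
  · rintro ⟨hB, hw⟩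
    have hle := six_mul_weight_add_weightDeficit_le hB
    have hdef := mul_succ_mod_six_le_weightDeficit t #B
    have hopt : weightDeficit t #B = ((t * (t + 1) % 6 : ℕ) : ℤ) := by linarith
    refine ⟨#B, (weightDeficit_eq_mul_succ_mod_six_iff t #B).mp hopt, ?_⟩
    exact (eq_topNiceSet_of_six_mul_weight_add_weightDeficit_eq (by omega) hB (by linarith)).symm
  · rintro ⟨k, hk, rfl⟩
    have hkt := two_mul_le_of_mem_optimalSizes ht hk
    have hopt := (weightDeficit_eq_mul_succ_mod_six_iff t k).mpr hk
    have := six_mul_weight_topNiceSet_add_weightDeficit (by omega) hkt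
    refine ⟨mem_niceSets.mpr ⟨topNiceSet_subset_Icc (by omega), isNice_topNiceSet (by omega)⟩, ?_⟩
    linarith

/-- The number of nice subsets of {1,...,t-1} achieving the maximal weight ⌊C(t+1,2)/3⌋
is 2 if t ≡ 1 (mod 3) and 1 otherwise. -/
theorem nice_max_weight_count (t : ℕ) (ht : 2 ≤ t) :
    ((niceSets t).filter (fun B => weight B = (((t + 1).choose 2 / 3 : ℕ) : ℤ))).card =
      if t % 3 = 1 then 2 else 1 := by
  have hmaximal : (niceSets t).filter (fun B => weight B = (((t + 1).choose 2 / 3 : ℕ) : ℤ)) =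
      (optimalSizes t).image (topNiceSet (t - 1)) := by
    ext B
    rw [mem_filter, mem_image]
    exact mem_niceSets_and_weight_eq_iff ht
  have hinj : Set.InjOn (topNiceSet (t - 1)) (optimalSizes t) := by
    intro k hk l hl hkl
    have hkt := two_mul_le_of_mem_optimalSizes ht hk
    have hlt := two_mul_le_of_mem_optimalSizes ht hl
    rw [← card_topNiceSet (n := t - 1) (by omega : 2 * k ≤ t - 1 + 1), hkl,
      card_topNiceSet (by omega)]
  rw [hmaximal, card_image_of_injOn hinj, card_optimalSizes]
end

section
/- For t ≥ 2, the sum over all nice subsets B of {1,...,t-1} of the weight (Σ_{x∈B} x) - C(|B|,2) equals Σ_{i+j+k=t+1, i,j,k≥1} F_i·F_j·F_k, where F denotes the Fibonacci sequence with F_0=0, F_1=1. -/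
/-- ψ_n = Σ_{i+j+k=n, i,j,k ≥ 1} F_i F_j F_k. -/
def psi (n : ℕ) : ℕ :=
  ∑ i ∈ Finset.range (n + 1), ∑ j ∈ Finset.range (n + 1), ∑ k ∈ Finset.range (n + 1),
    if i + j + k = n ∧ 1 ≤ i ∧ 1 ≤ j ∧ 1 ≤ k then Nat.fib i * Nat.fib j * Nat.fib k else 0

def niceP (n : ℕ) : Finset (Finset ℕ) :=
  (Finset.Icc 1 n).powerset.filter (fun B => ∀ x ∈ B, x + 1 ∉ B)

def g (n : ℕ) : ℕ := ∑ i ∈ Finset.range (n+1), Nat.fib i * Nat.fib (n - i)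

def psiR (n : ℕ) : ℕ := ∑ i ∈ Finset.range (n+1), Nat.fib i * g (n - i)

def A : ℕ → ℕ
  | 0 => 1
  | 1 => 2
  | (n+2) => A (n+1) + A n

def Cc : ℕ → ℕ
  | 0 => 0
  | 1 => 1
  | (n+2) => Cc (n+1) + Cc n + A n

lemma A_eq : ∀ n, A n = Nat.fib (n+2)
  | 0 => by decide
  | 1 => by decide
  | (n+2) => by
      show A (n+1) + A n = Nat.fib (n+2+2)
      rw [A_eq (n+1), A_eq n, Nat.fib_add_two (n := n+2)]
      exact Nat.add_comm _ _

lemma sum_fib_conv (n : ℕ) :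
    g (n+1) = ∑ i ∈ Finset.range (n+1), Nat.fib i * Nat.fib (n+1-i) := by
  rw [g, Finset.sum_range_succ]
  simp only [Nat.sub_self, Nat.fib_zero, mul_zero, add_zero]

lemma g_rec (n : ℕ) : g (n+2) = g (n+1) + g n + Nat.fib (n+1) := by
  rw [g, Finset.sum_range_succ, Finset.sum_range_succ]
  have h : ∀ i ∈ Finset.range (n+1),
      Nat.fib i * Nat.fib (n+2-i) = Nat.fib i * Nat.fib (n+1-i) + Nat.fib i * Nat.fib (n-i) := by
    intro i hi
    rw [Finset.mem_range] at hi
    rw [show n+2-i = (n-i)+2 by omega, Nat.fib_add_two, show (n-i)+1 = n+1-i by omega]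
    ring
  rw [Finset.sum_congr rfl h, Finset.sum_add_distrib, ← sum_fib_conv]
  have hg : (∑ i ∈ Finset.range (n+1), Nat.fib i * Nat.fib (n-i)) = g n := rfl
  rw [hg, show n+2-(n+1) = 1 by omega, show n+2-(n+2) = 0 by omega]
  simp

lemma psiR_rec (n : ℕ) : psiR (n+2) = psiR (n+1) + psiR n + g (n+1) := by
  rw [psiR, Finset.sum_range_succ, Finset.sum_range_succ]
  have h : ∀ i ∈ Finset.range (n+1),
      Nat.fib i * g (n+2-i)
      = Nat.fib i * g (n+1-i) + Nat.fib i * g (n-i) + Nat.fib i * Nat.fib (n+1-i) := by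
    intro i hi
    rw [Finset.mem_range] at hi
    rw [show n+2-i = (n-i)+2 by omega, g_rec, show (n-i)+1 = n+1-i by omega]
    ring
  rw [Finset.sum_congr rfl h, Finset.sum_add_distrib, Finset.sum_add_distrib, ← sum_fib_conv]
  have h1 : psiR (n+1) = ∑ i ∈ Finset.range (n+1), Nat.fib i * g (n+1-i) := by
    rw [psiR, Finset.sum_range_succ]
    have : n+1-(n+1) = 0 := by omega
    rw [this]
    simp [g]
  have h0 : psiR n = ∑ i ∈ Finset.range (n+1), Nat.fib i * g (n-i) := rfl
  rw [← h1, ← h0, show n+2-(n+1) = 1 by omega, show n+2-(n+2) = 0 by omega]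
  have hg1 : g 1 = 0 := by decide
  have hg0 : g 0 = 0 := by decide
  rw [hg1, hg0]
  ring

lemma key : ∀ n, (n+2) * Nat.fib (n+2) = g (n+3) + Cc n
  | 0 => by decide
  | 1 => by decide
  | (n+2) => by
      show (n+4) * Nat.fib (n+4) = g (n+5) + Cc (n+2)
      have h1 : (n+3) * Nat.fib (n+3) = g (n+4) + Cc (n+1) := key (n+1)
      have h2 : (n+2) * Nat.fib (n+2) = g (n+3) + Cc n := key n
      have hg : g (n+5) = g (n+4) + g (n+3) + Nat.fib (n+4) := g_rec (n+3)
      have hf : Nat.fib (n+4) = Nat.fib (n+2) + Nat.fib (n+3) := Nat.fib_add_two (n := n+2)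
      have hc : Cc (n+2) = Cc (n+1) + Cc n + A n := rfl
      rw [hc, A_eq]
      zify at h1 h2 hg hf ⊢
      linear_combination h1 + h2 + ((n:ℤ)+3) * hf - hg

lemma psi_eq_psiR (n : ℕ) :
    (∑ i ∈ Finset.range (n + 1), ∑ j ∈ Finset.range (n + 1), ∑ k ∈ Finset.range (n + 1),
      if i + j + k = n ∧ 1 ≤ i ∧ 1 ≤ j ∧ 1 ≤ k then Nat.fib i * Nat.fib j * Nat.fib k else 0)
    = psiR n := by
  have h1 : ∀ i j k : ℕ,
      (if i + j + k = n ∧ 1 ≤ i ∧ 1 ≤ j ∧ 1 ≤ k then Nat.fib i * Nat.fib j * Nat.fib k else 0)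
      = if i + j + k = n then Nat.fib i * Nat.fib j * Nat.fib k else 0 := by
    intro i j k
    rcases Nat.eq_zero_or_pos i with hi | hi
    · subst hi; simp
    rcases Nat.eq_zero_or_pos j with hj | hj
    · subst hj; simp
    rcases Nat.eq_zero_or_pos k with hk | hk
    · subst hk; simp
    have hcond : (i + j + k = n ∧ 1 ≤ i ∧ 1 ≤ j ∧ 1 ≤ k) ↔ i + j + k = n := by omega
    simp only [hcond]
  simp only [h1]
  have h2 : ∀ i ∈ Finset.range (n+1), ∀ j ∈ Finset.range (n+1),
      (∑ k ∈ Finset.range (n+1), if i + j + k = n then Nat.fib i * Nat.fib j * Nat.fib k else 0)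
      = if i + j ≤ n then Nat.fib i * Nat.fib j * Nat.fib (n - i - j) else 0 := by
    intro i _ j _
    by_cases h : i + j ≤ n
    · rw [if_pos h, Finset.sum_eq_single (n - i - j)]
      · rw [if_pos (by omega)]
      · intro k _ hk; rw [if_neg (by omega)]
      · intro hk; exact absurd (Finset.mem_range.mpr (by omega)) hk
    · rw [if_neg h]
      exact Finset.sum_eq_zero fun k _ => if_neg (by omega)
  rw [Finset.sum_congr rfl (fun i hi => Finset.sum_congr rfl (fun j hj => h2 i hi j hj))]
  have h3 : ∀ i ∈ Finset.range (n+1),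
      (∑ j ∈ Finset.range (n+1), if i + j ≤ n then Nat.fib i * Nat.fib j * Nat.fib (n - i - j) else 0)
      = Nat.fib i * g (n - i) := by
    intro i hi
    rw [Finset.mem_range] at hi
    rw [g, Finset.mul_sum,
      ← Finset.sum_subset (Finset.range_subset_range.mpr (by omega : n - i + 1 ≤ n + 1))
        (fun j _ hj => if_neg (by rw [Finset.mem_range] at hj; omega))]
    refine Finset.sum_congr rfl fun j hj => ?_
    rw [Finset.mem_range] at hj
    rw [if_pos (by omega : i + j ≤ n), mul_assoc]
  rw [Finset.sum_congr rfl h3, psiR]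

-- combinatorial side

lemma mem_niceP {n : ℕ} {B : Finset ℕ} :
    B ∈ niceP n ↔ B ⊆ Finset.Icc 1 n ∧ ∀ x ∈ B, x + 1 ∉ B := by
  simp [niceP]

lemma notMem_of_niceP {n : ℕ} {B : Finset ℕ} (hB : B ∈ niceP n) {m : ℕ} (hm : n < m) :
    m ∉ B := by
  intro hmB
  have := (mem_niceP.mp hB).1 hmB
  rw [Finset.mem_Icc] at this
  omega

lemma niceP_rec (n : ℕ) :
    niceP (n+2) = niceP (n+1) ∪ (niceP n).image (insert (n+2)) := by
  ext B
  simp only [Finset.mem_union, Finset.mem_image, mem_niceP]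
  constructor
  · rintro ⟨hsub, hnice⟩
    by_cases hm : n + 2 ∈ B
    · right
      refine ⟨B.erase (n+2), ⟨?_, ?_⟩, Finset.insert_erase hm⟩
      · intro x hx
        have hx' := Finset.mem_of_mem_erase hx
        have h1 := hsub hx'
        rw [Finset.mem_Icc] at h1 ⊢
        have hne := Finset.ne_of_mem_erase hx
        refine ⟨h1.1, ?_⟩
        by_contra hcon
        have hx1 : x = n + 1 := by omega
        exact hnice x hx' (by rw [hx1]; exact hm)
      · intro x hx hx1
        exact hnice x (Finset.mem_of_mem_erase hx) (Finset.mem_of_mem_erase hx1)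
    · left
      refine ⟨?_, hnice⟩
      intro x hx
      have h1 := hsub hx
      rw [Finset.mem_Icc] at h1 ⊢
      have : x ≠ n + 2 := fun h => hm (h ▸ hx)
      omega
  · rintro (⟨hsub, hnice⟩ | ⟨B', ⟨hsub, hnice⟩, rfl⟩)
    · exact ⟨hsub.trans (Finset.Icc_subset_Icc_right (by omega)), hnice⟩
    · have hB' : ∀ x ∈ B', x ≤ n := by
        intro x hx; have := hsub hx; rw [Finset.mem_Icc] at this; omega
      constructor
      · intro x hx
        rw [Finset.mem_insert] at hx
        rw [Finset.mem_Icc]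
        rcases hx with rfl | hx
        · omega
        · have := hsub hx; rw [Finset.mem_Icc] at this; omega
      · intro x hx hx1
        rw [Finset.mem_insert] at hx hx1
        rcases hx with rfl | hx
        · rcases hx1 with h | h
          · omega
          · exact absurd (hB' _ h) (by omega)
        · rcases hx1 with h | h
          · exact absurd (hB' _ hx) (by omega)
          · exact hnice x hx h

lemma sum_niceP_rec {M : Type*} [AddCommMonoid M] (n : ℕ) (f : Finset ℕ → M) :
    ∑ B ∈ niceP (n+2), f B
      = (∑ B ∈ niceP (n+1), f B) + ∑ B ∈ niceP n, f (insert (n+2) B) := by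
  rw [niceP_rec, Finset.sum_union, Finset.sum_image]
  · intro B hB B' hB' h
    have h2 : n + 2 ∉ B := notMem_of_niceP hB (by omega)
    have h2' : n + 2 ∉ B' := notMem_of_niceP hB' (by omega)
    rw [← Finset.erase_insert h2, ← Finset.erase_insert h2', h]
  · rw [Finset.disjoint_left]
    intro B hB hB2
    rw [Finset.mem_image] at hB2
    obtain ⟨B', hB', rfl⟩ := hB2
    exact notMem_of_niceP hB (by omega) (Finset.mem_insert_self _ _)

lemma card_niceP : ∀ n, (niceP n).card = A n
  | 0 => by decide
  | 1 => by decide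
  | (n+2) => by
      have h := sum_niceP_rec n (fun _ => (1 : ℕ))
      simp only [Finset.sum_const, smul_eq_mul, mul_one] at h
      show (niceP (n+2)).card = A (n+2)
      rw [h, card_niceP (n+1), card_niceP n]
      rfl

lemma csum_niceP : ∀ n, (∑ B ∈ niceP n, B.card) = Cc n
  | 0 => by decide
  | 1 => by decide
  | (n+2) => by
      rw [sum_niceP_rec n (fun B => B.card)]
      have h : ∀ B ∈ niceP n, (insert (n+2) B).card = B.card + 1 := fun B hB =>
        Finset.card_insert_of_notMem (notMem_of_niceP hB (by omega))
      rw [Finset.sum_congr rfl h, Finset.sum_add_distrib, Finset.sum_const, smul_eq_mul, mul_one,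
        csum_niceP (n+1), csum_niceP n, card_niceP]
      have hc : Cc (n+2) = Cc (n+1) + Cc n + A n := rfl
      rw [hc]
      ring

lemma weight_insert {B : Finset ℕ} {m : ℕ} (h : m ∉ B) :
    weight (insert m B) = weight B + (m : ℤ) - (B.card : ℤ) := by
  rw [weight, weight, Finset.sum_insert h, Finset.card_insert_of_notMem h]
  have hch : (B.card + 1).choose 2 = B.card.choose 1 + B.card.choose 2 :=
    Nat.choose_succ_succ _ 1
  rw [hch, Nat.choose_one_right]
  push_cast
  ring

lemma step_int (n : ℕ) :
    (psiR (n+3) : ℤ) + (psiR (n+2) : ℤ) + (A n : ℤ) * ((n:ℤ)+2)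
      = (psiR (n+4) : ℤ) + (Cc n : ℤ) := by
  have hrec : psiR (n+4) = psiR (n+3) + psiR (n+2) + g (n+3) := psiR_rec (n+2)
  have hk := key n
  have hA := A_eq n
  zify at hrec hk hA
  rw [hA]
  linear_combination hk - hrec

lemma wsum_niceP : ∀ n, (∑ B ∈ niceP n, weight B) = (psiR (n+2) : ℤ)
  | 0 => by decide
  | 1 => by decide
  | (n+2) => by
      show (∑ B ∈ niceP (n+2), weight B) = (psiR (n+4) : ℤ)
      rw [sum_niceP_rec n weight]
      have h : ∀ B ∈ niceP n, weight (insert (n+2) B)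
          = weight B + ((n:ℤ)+2) - (B.card : ℤ) := by
        intro B hB
        rw [weight_insert (notMem_of_niceP hB (by omega))]
        push_cast
        ring
      have w1 : (∑ B ∈ niceP (n+1), weight B) = (psiR (n+3) : ℤ) := wsum_niceP (n+1)
      have w0 : (∑ B ∈ niceP n, weight B) = (psiR (n+2) : ℤ) := wsum_niceP n
      rw [Finset.sum_congr rfl h, Finset.sum_sub_distrib, Finset.sum_add_distrib,
        Finset.sum_const, w1, w0, card_niceP]
      have hc : (∑ B ∈ niceP n, (B.card : ℤ)) = (Cc n : ℤ) := by
        rw [← csum_niceP n]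
        push_cast
        rfl
      rw [hc]
      simp only [nsmul_eq_mul]
      linarith [step_int n]

/-- The sum of the weights of all nice subsets of {1,...,t-1} equals
Σ_{i+j+k=t+1, i,j,k≥1} F_i F_j F_k. -/
theorem nice_weight_sum (t : ℕ) (ht : 2 ≤ t) :
    ∑ B ∈ niceSets t, weight B = (psi (t + 1) : ℤ) := by
  obtain ⟨m, rfl⟩ : ∃ m, t = m + 2 := ⟨t - 2, by omega⟩
  have h1 : niceSets (m+2) = niceP (m+1) := rfl
  rw [h1, wsum_niceP (m+1), psi]
  norm_cast
  exact (psi_eq_psiR (m+3)).symm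
end

section
/- For t ≥ 4, the sum b_t = Σ_{B nice subset of {1,...,t-1}} |B| satisfies the recurrence b_t = b_{t-1} + b_{t-2} + F_{t-1}. -/
/-- b_t: the sum of the cardinalities of the nice subsets of {1,...,t-1}. -/
def b (t : ℕ) : ℕ := ∑ B ∈ niceSets t, B.card

open Finset

lemma nice_split (m : ℕ) :
    niceSets (m+2) = niceSets (m+1) ∪ (niceSets m).image (insert (m+1)) := by
  ext B
  simp only [niceSets, mem_filter, mem_powerset, mem_union, mem_image,
    Nat.add_sub_cancel]
  constructor
  · rintro ⟨hsub, hnice⟩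
    by_cases hm : m + 1 ∈ B
    · right
      refine ⟨B.erase (m+1), ⟨⟨?_, ?_⟩, ?_⟩⟩
      · intro x hx
        have hx' := mem_of_mem_erase hx
        have hxB := hsub hx'
        simp only [mem_Icc] at hxB ⊢
        have hne : x ≠ m + 1 := ne_of_mem_erase hx
        have hxm : x ≠ m := by
          intro h
          exact hnice x hx' (h ▸ hm)
        omega
      · intro x hx
        intro hx1
        exact hnice x (mem_of_mem_erase hx) (mem_of_mem_erase hx1)
      · exact insert_erase hm
    · left
      refine ⟨?_, hnice⟩
      intro x hx
      have hxB := hsub hx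
      simp only [mem_Icc] at hxB ⊢
      have : x ≠ m + 1 := fun h => hm (h ▸ hx)
      omega
  · rintro (⟨hsub, hnice⟩ | ⟨B', ⟨⟨hsub, hnice⟩, rfl⟩⟩)
    · exact ⟨hsub.trans (Icc_subset_Icc_right (by omega)), hnice⟩
    · have hB' : ∀ x ∈ B', x ∈ Finset.Icc 1 (m-1) := fun x hx => hsub hx
      constructor
      · intro x hx
        rcases mem_insert.mp hx with rfl | hx
        · simp only [mem_Icc]; omega
        · have := hB' x hx
          simp only [mem_Icc] at this ⊢
          omega
      · intro x hx hx1
        rcases mem_insert.mp hx with rfl | hx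
        · rcases mem_insert.mp hx1 with h | h
          · omega
          · have := hB' _ h; simp [mem_Icc] at this; omega
        · rcases mem_insert.mp hx1 with h | h
          · have := hB' x hx; simp [mem_Icc] at this; omega
          · exact hnice x hx h

lemma notMem_succ (m : ℕ) (B : Finset ℕ) (hB : B ∈ niceSets m) : m + 1 ∉ B := by
  simp only [niceSets, mem_filter, mem_powerset] at hB
  intro h
  have := hB.1 h
  simp [mem_Icc] at this
  omega

lemma notMem_top (m : ℕ) (B : Finset ℕ) (hB : B ∈ niceSets (m+1)) : m + 1 ∉ B := by
  simp only [niceSets, mem_filter, mem_powerset] at hB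
  intro h
  have := hB.1 h
  simp only [mem_Icc, Nat.add_sub_cancel] at this
  omega

lemma nice_disjoint (m : ℕ) :
    Disjoint (niceSets (m+1)) ((niceSets m).image (insert (m+1))) := by
  rw [disjoint_right]
  rintro B hB hB'
  simp only [mem_image] at hB
  obtain ⟨B', hB'', rfl⟩ := hB
  exact notMem_top m _ hB' (mem_insert_self _ _)

lemma nice_injOn (m : ℕ) :
    Set.InjOn (insert (m+1)) (niceSets m : Set (Finset ℕ)) := by
  intro x hx y hy h
  have hx' : m + 1 ∉ x := notMem_succ m x hx
  have hy' : m + 1 ∉ y := notMem_succ m y hy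
  have := congrArg (Finset.erase · (m+1)) h
  simpa [erase_insert hx', erase_insert hy'] using this

lemma card_nice (m : ℕ) : (niceSets m).card = Nat.fib (m+1) := by
  induction m using Nat.twoStepInduction with
  | zero => decide
  | one => decide
  | more m ih1 ih2 =>
    rw [nice_split, card_union_of_disjoint (nice_disjoint m),
      card_image_of_injOn (nice_injOn m), ih1, ih2,
      show m+2+1 = (m+1)+2 by ring, Nat.fib_add_two (n := m+1)]
    omega

lemma b_succ (m : ℕ) : b (m+2) = b (m+1) + b m + Nat.fib (m+1) := by
  unfold b
  rw [nice_split, sum_union (nice_disjoint m), sum_image (fun x hx y hy h => nice_injOn m hx hy h)]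
  have : ∑ B ∈ niceSets m, (insert (m+1) B).card
      = ∑ B ∈ niceSets m, (B.card + 1) := by
    apply sum_congr rfl
    intro B hB
    rw [card_insert_of_notMem (notMem_succ m B hB)]
  rw [this, sum_add_distrib, sum_const, smul_eq_mul, mul_one, card_nice]
  ring

/-- For t ≥ 4, b_t = b_{t-1} + b_{t-2} + F_{t-1}. -/
theorem b_recurrence (t : ℕ) (ht : 4 ≤ t) :
    b t = b (t - 1) + b (t - 2) + Nat.fib (t - 1) := by
  obtain ⟨m, rfl⟩ : ∃ m, t = m + 2 := ⟨t - 2, by omega⟩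
  have h1 : m + 2 - 1 = m + 1 := by omega
  have h2 : m + 2 - 2 = m := by omega
  rw [h1, h2, b_succ]
end

section
/- If λ is a partition with distinct parts that is simultaneously a t-core and a (t+1)-core (t ≥ 2), then every element of its β-set is at most t-1. -/
/-
An element `x ≥ t` of the β-set cannot exist: if `x = t`, the `t`-core property puts `0` in the
β-set, impossible for a partition with positive parts; if `x > t`, the two core properties put both
`x - t - 1` and `x - t` in the β-set, two β-numbers differing by one, impossible for distinct parts.
-/

/-- The β-set of a partition given as a list (λ_1, ..., λ_ℓ):
the set {λ_i + ℓ - i : 1 ≤ i ≤ ℓ} of first-column hook lengths. -/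
def betaSet (l : List ℕ) : Finset ℕ :=
  Finset.image (fun i => l.getD i 0 + (l.length - 1 - i)) (Finset.range l.length)

/-- A partition is an s-core iff for every x in its β-set with x ≥ s, also x - s is in the β-set. -/
def IsCoreBeta (l : List ℕ) (s : ℕ) : Prop :=
  ∀ x ∈ betaSet l, s ≤ x → x - s ∈ betaSet l

lemma mem_betaSet {l : List ℕ} {x : ℕ} :
    x ∈ betaSet l ↔ ∃ i < l.length, l.getD i 0 + (l.length - 1 - i) = x := by
  simp only [betaSet, Finset.mem_image, Finset.mem_range]

lemma zero_notMem_betaSet {l : List ℕ} (hpos : ∀ p ∈ l, 0 < p) : 0 ∉ betaSet l := by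
  rw [mem_betaSet]
  rintro ⟨i, hi, hzero⟩
  have := hpos _ (List.getElem_mem hi)
  simp only [List.getD_eq_getElem _ _ hi] at hzero
  omega

lemma betaSet_gap {l : List ℕ} (hsort : l.Pairwise (· ≥ ·)) (hdist : l.Nodup)
    {i j : ℕ} (hij : i < j) (hj : j < l.length) :
    l.getD j 0 + (l.length - 1 - j) + 2 ≤ l.getD i 0 + (l.length - 1 - i) := by
  have hi : i < l.length := hij.trans hj
  have hge : l[j] ≤ l[i] := List.pairwise_iff_getElem.mp hsort i j hi hj hij
  have hne : l[i] ≠ l[j] := fun h => hij.ne ((List.Nodup.getElem_inj_iff hdist).mp h)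
  rw [List.getD_eq_getElem _ _ hi, List.getD_eq_getElem _ _ hj]
  omega

lemma succ_notMem_betaSet {l : List ℕ} (hsort : l.Pairwise (· ≥ ·)) (hdist : l.Nodup)
    {y : ℕ} (hy : y ∈ betaSet l) : y + 1 ∉ betaSet l := by
  intro hy'
  obtain ⟨i, hi, rfl⟩ := mem_betaSet.mp hy
  obtain ⟨j, hj, hji⟩ := mem_betaSet.mp hy'
  rcases lt_trichotomy i j with hij | rfl | hji'
  · have := betaSet_gap hsort hdist hij hj
    omega
  · omega
  · have := betaSet_gap hsort hdist hji' hi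
    omega

theorem beta_bounded_general (t : ℕ) (l : List ℕ)
    (hsort : l.Pairwise (· ≥ ·)) (hpos : ∀ p ∈ l, 0 < p) (hdist : l.Nodup)
    (hcore1 : IsCoreBeta l t) (hcore2 : IsCoreBeta l (t + 1)) :
    ∀ x ∈ betaSet l, x ≤ t - 1 := by
  intro x hx
  by_contra! hlarge
  rcases (show t = x ∨ t < x by omega) with rfl | hlt
  · exact zero_notMem_betaSet hpos (by simpa using hcore1 t hx le_rfl)
  · have hsucc : x - (t + 1) + 1 = x - t := by omega
    exact succ_notMem_betaSet hsort hdist (hcore2 x hx hlt) (hsucc ▸ hcore1 x hx hlt.le)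

/-- If λ is a (t, t+1)-core partition with distinct parts, then every element of its β-set
is at most t - 1. -/
theorem beta_bounded (t : ℕ) (ht : 2 ≤ t) (l : List ℕ)
    (hsort : l.Pairwise (· ≥ ·)) (hpos : ∀ p ∈ l, 0 < p) (hdist : l.Nodup)
    (hcore1 : IsCoreBeta l t) (hcore2 : IsCoreBeta l (t + 1)) :
    ∀ x ∈ betaSet l, x ≤ t - 1 :=
  beta_bounded_general t l hsort hpos hdist hcore1 hcore2
end

section
/- If λ is a partition that is simultaneously a t-core and a (t+1)-core for t ≥ 2, then every element x of β(λ) satisfies (k-1)(t+1)+1 ≤ x ≤ kt-1 for some k with 1 ≤ k ≤ t-1; equivalently, β(λ) contains no number of the form at + b(t+1) with a, b ≥ 0 nonnegative integers. -/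
lemma IsCoreBeta.mem_of_mul_add_mem {l : List ℕ} {s : ℕ} (hs : IsCoreBeta l s) (a y : ℕ)
    (h : a * s + y ∈ betaSet l) : y ∈ betaSet l := by
  induction a with
  | zero => simpa using h
  | succ a ih =>
    apply ih
    have hsub := hs _ h (by rw [Nat.succ_mul]; omega)
    rwa [Nat.succ_mul, Nat.add_right_comm, Nat.add_sub_cancel] at hsub

lemma mul_add_mul_notMem_betaSet {l : List ℕ} {s s' : ℕ} (hpos : ∀ p ∈ l, 0 < p)
    (hs : IsCoreBeta l s) (hs' : IsCoreBeta l s') (a b : ℕ) :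
    a * s + b * s' ∉ betaSet l := by
  intro h
  have hb := hs.mem_of_mul_add_mem a _ h
  exact zero_notMem_betaSet hpos (hs'.mem_of_mul_add_mem b 0 (by simpa using hb))

lemma exists_window_of_forall_mul_add_mul_ne {t x : ℕ} (h : ∀ a b, a * t + b * (t + 1) ≠ x) :
    ∃ k, 1 ≤ k ∧ k ≤ t - 1 ∧ (k - 1) * (t + 1) + 1 ≤ x ∧ x ≤ k * t - 1 := by
  rcases Nat.eq_zero_or_pos t with rfl | ht
  · exact absurd (by simp) (h 0 x)
  obtain ⟨d, r, hx, hr⟩ : ∃ d r, d * t + r = x ∧ r < t :=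
    ⟨x / t, x % t, by rw [Nat.mul_comm, Nat.div_add_mod], Nat.mod_lt x ht⟩
  have hdr : d < r := by
    by_contra! hrd
    apply h (d - r) r
    rw [← hx, Nat.sub_mul, Nat.mul_succ]
    have : r * t ≤ d * t := Nat.mul_le_mul_right t hrd
    omega
  refine ⟨d + 1, by omega, by omega, ?_, ?_⟩
  · rw [Nat.add_sub_cancel, Nat.mul_succ]
    omega
  · rw [Nat.succ_mul]
    omega

theorem beta_structure_general (t : ℕ) (l : List ℕ)
    (hpos : ∀ p ∈ l, 0 < p)
    (hcore1 : IsCoreBeta l t) (hcore2 : IsCoreBeta l (t + 1)) :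
    ∀ x ∈ betaSet l, ∃ k, 1 ≤ k ∧ k ≤ t - 1 ∧ (k - 1) * (t + 1) + 1 ≤ x ∧ x ≤ k * t - 1 := by
  intro x hx
  apply exists_window_of_forall_mul_add_mul_ne
  rintro a b rfl
  exact mul_add_mul_notMem_betaSet hpos hcore1 hcore2 a b hx

/-- If λ is a (t, t+1)-core partition, then every element x of its β-set satisfies
(k-1)(t+1)+1 ≤ x ≤ kt-1 for some 1 ≤ k ≤ t-1. -/
theorem beta_structure (t : ℕ) (ht : 2 ≤ t) (l : List ℕ)
    (hsort : l.Pairwise (· ≥ ·)) (hpos : ∀ p ∈ l, 0 < p)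
    (hcore1 : IsCoreBeta l t) (hcore2 : IsCoreBeta l (t + 1)) :
    ∀ x ∈ betaSet l, ∃ k, 1 ≤ k ∧ k ≤ t - 1 ∧ (k - 1) * (t + 1) + 1 ≤ x ∧ x ≤ k * t - 1 :=
  beta_structure_general t l hpos hcore1 hcore2
end

section
/- For t ≥ 2, the number of partitions with distinct parts that are simultaneously t-core and (t+1)-core equals the Fibonacci number F_{t+1} (with F_0=0, F_1=1). -/
/-- The hook length of the box in row i (0-indexed) and column j (1-indexed) of the Young
diagram of the partition (λ_1, ..., λ_ℓ): arm + leg + 1. -/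
def hook (l : List ℕ) (i j : ℕ) : ℕ :=
  (l.getD i 0 - j) + ((l.drop (i + 1)).filter (fun p => decide (j ≤ p))).length + 1

/-- A partition is an s-core if none of its hook lengths equals s. -/
def IsCore (l : List ℕ) (s : ℕ) : Prop :=
  ∀ i j, i < l.length → 1 ≤ j → j ≤ l.getD i 0 → hook l i j ≠ s

/-!
For a partition with distinct parts, largest part `a` and `ℓ` parts, the largest hook is
`a + ℓ - 1`. Read from right to left, the hooks of the first row start at `1` and grow by `1` or
`2` per box (by `2` exactly when the column index is itself a part), so every value up to
`a + ℓ - 1` is a hook or one less than a hook. Hence such a partition is a `(t, t+1)`-core iff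
`a + ℓ ≤ t`. Among these, either `a + ℓ ≤ t - 1`, or `a + ℓ = t` and removing the largest part
leaves an arbitrary partition of the same kind for `t - 2`; this is the Fibonacci recursion.
-/

theorem Nat.exists_eq_or_eq_succ_of_le_add_two {g : ℕ → ℕ} (hg : ∀ j, g j ≤ g (j + 1) + 2)
    {lo hi v : ℕ} (hle : lo ≤ hi) (hhi : g hi ≤ v) (hlo : v ≤ g lo) :
    ∃ j, lo ≤ j ∧ j ≤ hi ∧ (g j = v ∨ g j = v + 1) := by
  induction hi, hle using Nat.le_induction with
  | base => exact ⟨lo, le_rfl, le_rfl, .inl (by omega)⟩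
  | succ hi hle ih =>
    by_cases h : g hi ≤ v
    · obtain ⟨j, hj⟩ := ih h
      exact ⟨j, hj.1, by omega, hj.2.2⟩
    · have := hg hi
      by_cases h' : g hi = v + 1
      · exact ⟨hi, hle, by omega, .inr h'⟩
      · exact ⟨hi + 1, by omega, le_rfl, .inl (by omega)⟩

theorem List.length_filter_le_eq_length_filter_succ_le_add_count (m : List ℕ) (j : ℕ) :
    (m.filter (j ≤ ·)).length = (m.filter (j + 1 ≤ ·)).length + m.count j := by
  induction m with
  | nil => rfl
  | cons b m ih =>
    simp only [List.filter_cons, List.count_cons, beq_iff_eq]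
    split_ifs <;> simp_all <;> omega

theorem List.forall_mem_cons_add_length_le_iff {a t : ℕ} {m : List ℕ}
    (hs : (a :: m).Pairwise (· > ·)) :
    (∀ p ∈ a :: m, p + (a :: m).length ≤ t) ↔ a + m.length + 1 ≤ t := by
  refine ⟨fun h => h a List.mem_cons_self, fun h p hp => ?_⟩
  rcases List.mem_cons.mp hp with rfl | hp
  · exact h
  · have := List.rel_of_pairwise_cons hs hp
    simp only [List.length_cons]
    omega

theorem hook_cons_zero (a : ℕ) (m : List ℕ) (j : ℕ) :
    hook (a :: m) 0 j = (a - j) + (m.filter (j ≤ ·)).length + 1 := rfl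

theorem hook_cons_zero_le_succ_add_two {a : ℕ} {m : List ℕ} (hm : m.Nodup) (j : ℕ) :
    hook (a :: m) 0 j ≤ hook (a :: m) 0 (j + 1) + 2 := by
  have := m.length_filter_le_eq_length_filter_succ_le_add_count j
  have := List.nodup_iff_count_le_one.mp hm j
  simp only [hook_cons_zero]
  omega

theorem hook_cons_zero_self {a : ℕ} {m : List ℕ} (hm : ∀ p ∈ m, p < a) :
    hook (a :: m) 0 a = 1 := by
  rw [hook_cons_zero, List.filter_eq_nil_iff.mpr fun p hp => by simpa using hm p hp]
  simp

theorem hook_cons_zero_one {a : ℕ} {m : List ℕ} (ha : 0 < a) (hm : ∀ p ∈ m, 0 < p) :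
    hook (a :: m) 0 1 = a + m.length := by
  rw [hook_cons_zero, List.filter_eq_self.mpr fun p hp => decide_eq_true (p := 1 ≤ p) (hm p hp)]
  omega

theorem hook_lt_getD_add_length {l : List ℕ} {i j : ℕ} (hi : i < l.length) (hj : 1 ≤ j)
    (hjl : j ≤ l.getD i 0) : hook l i j < l.getD i 0 + l.length := by
  have := (List.length_filter_le (j ≤ ·) (l.drop (i + 1))).trans_eq List.length_drop
  unfold hook
  omega

theorem isCore_of_forall_add_length_le {l : List ℕ} {s : ℕ} (h : ∀ p ∈ l, p + l.length ≤ s) :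
    IsCore l s := by
  intro i j hi hj hjl
  have hmem : l.getD i 0 ∈ l := by
    rw [List.getD_eq_getElem _ _ hi]
    exact List.getElem_mem hi
  exact ((hook_lt_getD_add_length hi hj hjl).trans_le (h _ hmem)).ne

theorem forall_add_length_le_of_isCore {t : ℕ} {l : List ℕ} (ht : 1 ≤ t)
    (hs : l.Pairwise (· > ·)) (hp : ∀ p ∈ l, 0 < p) (h₁ : IsCore l t) (h₂ : IsCore l (t + 1)) :
    ∀ p ∈ l, p + l.length ≤ t := by
  rcases l with _ | ⟨a, m⟩
  · simp
  rw [List.forall_mem_cons_add_length_le_iff hs]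
  by_contra! hlarge
  obtain ⟨hma, hm⟩ := List.pairwise_cons.mp hs
  have ha := hp a List.mem_cons_self
  obtain ⟨j, hj₁, hja, hj⟩ := Nat.exists_eq_or_eq_succ_of_le_add_two
    (hook_cons_zero_le_succ_add_two hm.nodup) ha
    ((hook_cons_zero_self hma).trans_le ht)
    ((hook_cons_zero_one ha fun p hp' => hp p (.tail a hp')).symm ▸ (by omega))
  rcases hj with hj | hj
  · exact h₁ 0 j (by simp) hj₁ hja hj
  · exact h₂ 0 j (by simp) hj₁ hja hj

theorem isCore_and_isCore_succ_iff {t : ℕ} {l : List ℕ} (ht : 1 ≤ t)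
    (hs : l.Pairwise (· > ·)) (hp : ∀ p ∈ l, 0 < p) :
    IsCore l t ∧ IsCore l (t + 1) ↔ ∀ p ∈ l, p + l.length ≤ t :=
  ⟨fun ⟨h₁, h₂⟩ => forall_add_length_le_of_isCore ht hs hp h₁ h₂, fun h =>
    ⟨isCore_of_forall_add_length_le h,
      isCore_of_forall_add_length_le fun p hp' => (h p hp').trans t.le_succ⟩⟩

/-- For a strictly decreasing list the last condition says that the largest part plus the
number of parts is at most `t`. -/
def distinctWithin (t : ℕ) : Set (List ℕ) :=
  {l | l.Pairwise (· > ·) ∧ (∀ p ∈ l, 0 < p) ∧ ∀ p ∈ l, p + l.length ≤ t}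

theorem length_le_of_mem_distinctWithin {t : ℕ} {l : List ℕ} (hl : l ∈ distinctWithin t) :
    l.length ≤ t := by
  rcases l with _ | ⟨a, m⟩
  · simp
  · have := hl.2.2 a List.mem_cons_self
    omega

theorem distinctWithin_mono {s t : ℕ} (hst : s ≤ t) : distinctWithin s ⊆ distinctWithin t :=
  fun _ ⟨hs, hp, hb⟩ => ⟨hs, hp, fun p hp' => (hb p hp').trans hst⟩

theorem distinctWithin_of_le_one {t : ℕ} (ht : t ≤ 1) : distinctWithin t = {[]} := by
  ext (_ | ⟨a, m⟩)
  · simp [distinctWithin]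
  · simp only [Set.mem_singleton_iff, reduceCtorEq, iff_false]
    rintro ⟨-, hp, hb⟩
    have := hp a List.mem_cons_self
    have := hb a List.mem_cons_self
    simp only [List.length_cons] at this
    omega

theorem distinctWithin_add_two (t : ℕ) :
    distinctWithin (t + 2) =
      distinctWithin (t + 1) ∪ (fun m => (t + 1 - m.length) :: m) '' distinctWithin t := by
  ext (_ | ⟨a, m⟩)
  · simp [distinctWithin]
  simp only [distinctWithin, Set.mem_union, Set.mem_image, Set.mem_ofPred_eq, List.cons.injEq]
  constructor
  · rintro ⟨hs, hp, hb⟩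
    rw [List.forall_mem_cons_add_length_le_iff hs] at hb
    by_cases hsmall : a + m.length + 1 ≤ t + 1
    · exact .inl ⟨hs, hp, (List.forall_mem_cons_add_length_le_iff hs).mpr hsmall⟩
    · refine .inr ⟨m, ⟨hs.of_cons, fun p hp' => hp p (.tail a hp'), fun p hp' => ?_⟩,
        by omega, rfl⟩
      have := List.rel_of_pairwise_cons hs hp'
      omega
  · rintro (hl | ⟨m, ⟨hs, hp, hb⟩, rfl, rfl⟩)
    · exact distinctWithin_mono (by omega) hl
    · have hlen := length_le_of_mem_distinctWithin (t := t) ⟨hs, hp, hb⟩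
      have hs' : ((t + 1 - m.length) :: m).Pairwise (· > ·) :=
        List.pairwise_cons.mpr ⟨fun p hp' => by have := hb p hp'; omega, hs⟩
      refine ⟨hs', ?_, (List.forall_mem_cons_add_length_le_iff hs').mpr (by omega)⟩
      rintro p (_ | ⟨_, hp'⟩)
      · omega
      · exact hp p hp'

theorem ncard_distinctWithin (t : ℕ) : (distinctWithin t).ncard = Nat.fib (t + 1) := by
  induction t using Nat.twoStepInduction with
  | zero => simp [distinctWithin_of_le_one]
  | one => simp [distinctWithin_of_le_one]
  | more t ih₀ ih₁ =>
    have hdisj : Disjoint (distinctWithin (t + 1))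
        ((fun m => (t + 1 - m.length) :: m) '' distinctWithin t) := by
      refine Set.disjoint_left.mpr fun l hl ⟨m, hm, hml⟩ => ?_
      subst hml
      have := length_le_of_mem_distinctWithin hm
      have := hl.2.2 _ List.mem_cons_self
      simp only [List.length_cons] at this
      omega
    rw [distinctWithin_add_two, Set.ncard_union_eq hdisj
      (Set.finite_of_ncard_pos (by simp [ih₁]))
      ((Set.finite_of_ncard_pos (by simp [ih₀])).image _),
      Set.ncard_image_of_injective _ fun _ _ h => (List.cons.inj h).2, ih₀, ih₁,
      Nat.fib_add_two (n := t + 1), add_comm]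

/-- The number of (t, t+1)-core partitions with distinct parts is the Fibonacci number
F_{t+1}.  Partitions with distinct parts are identified with strictly decreasing lists of
positive integers. -/
theorem count_distinct_core (t : ℕ) (ht : 2 ≤ t) :
    {l : List ℕ | l.Pairwise (· > ·) ∧ (∀ p ∈ l, 0 < p) ∧
      IsCore l t ∧ IsCore l (t + 1)}.ncard = Nat.fib (t + 1) := by
  have hset : {l : List ℕ | l.Pairwise (· > ·) ∧ (∀ p ∈ l, 0 < p) ∧
      IsCore l t ∧ IsCore l (t + 1)} = distinctWithin t :=
    Set.ext fun _ => and_congr_right fun hs => and_congr_right fun hp =>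
      isCore_and_isCore_succ_iff (by omega) hs hp
  rw [hset, ncard_distinctWithin]
end

section
/- For t ≥ 2, the number of partitions with distinct parts of maximal size among those that are simultaneously t-core and (t+1)-core is 2 if t ≡ 1 (mod 3), and 1 otherwise. -/
lemma getD_add_le_getD_zero {l : List ℕ} (hl : l.Pairwise (· > ·)) {i : ℕ} (hi : i < l.length) :
    l.getD i 0 + i ≤ l.getD 0 0 := by
  induction i with
  | zero => simp
  | succ i ih =>
    have hlt : l.getD (i + 1) 0 < l.getD i 0 := by
      rw [List.getD_eq_getElem _ _ hi, List.getD_eq_getElem _ _ (by omega)]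
      exact List.pairwise_iff_getElem.1 hl i (i + 1) (by omega) hi (by omega)
    have := ih (by omega)
    omega

lemma length_le_getD_zero {l : List ℕ} (hl : l.Pairwise (· > ·)) (hpos : ∀ p ∈ l, 0 < p) :
    l.length ≤ l.getD 0 0 := by
  rcases Nat.eq_zero_or_pos l.length with h | h
  · omega
  · have hlast := hpos _ (l.getElem_mem (n := l.length - 1) (by omega))
    have := getD_add_le_getD_zero hl (i := l.length - 1) (by omega)
    rw [List.getD_eq_getElem _ _ (by omega)] at this
    omega

lemma List.Nodup.length_filter_le_le_succ {L : List ℕ} (hL : L.Nodup) (j : ℕ) :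
    (L.filter (fun p => decide (j ≤ p))).length ≤
      (L.filter (fun p => decide (j + 1 ≤ p))).length + 1 := by
  have hsplit : (L.filter (fun p => decide (j ≤ p))).length =
      (L.filter (fun p => decide (j + 1 ≤ p))).length + L.count j := by
    induction L with
    | nil => simp
    | cons x L ih =>
      simp only [List.filter_cons, List.count_cons]
      have := ih (List.nodup_cons.1 hL).2
      split_ifs <;> simp_all <;> omega
  have := List.nodup_iff_count_le_one.1 hL j
  omega

lemma exists_eq_or_eq_add_one_of_le_add_two (f : ℕ → ℕ) {a v : ℕ}
    (hstep : ∀ j < a, f j ≤ f (j + 1) + 2) (h0 : v ≤ f 0) (ha : f a ≤ v + 1) :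
    ∃ j ≤ a, f j = v ∨ f j = v + 1 := by
  induction a with
  | zero => exact ⟨0, le_rfl, by omega⟩
  | succ a ih =>
    by_cases h : f a ≤ v + 1
    · obtain ⟨j, hj, hfj⟩ := ih (fun j hj => hstep j (by omega)) h
      exact ⟨j, by omega, hfj⟩
    · have := hstep a (by omega)
      exact ⟨a + 1, le_rfl, by omega⟩

lemma hook_cons_zero_s17 (x : ℕ) (tl : List ℕ) (j : ℕ) :
    hook (x :: tl) 0 j = (x - j) + (tl.filter (fun p => decide (j ≤ p))).length + 1 := rfl

theorem getD_zero_add_length_le_of_isCore {l : List ℕ} {t : ℕ} (hl : l.Pairwise (· > ·))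
    (hpos : ∀ p ∈ l, 0 < p) (ht : IsCore l t) (ht' : IsCore l (t + 1)) :
    l.getD 0 0 + l.length ≤ t := by
  rcases l with _ | ⟨x, tl⟩
  · simp
  by_contra! hlt
  simp only [List.getD_cons_zero, List.length_cons] at hlt
  have hx : 0 < x := hpos x List.mem_cons_self
  obtain ⟨hx_gt, htl⟩ := List.pairwise_cons.1 hl
  have hfirst : hook (x :: tl) 0 1 = x + tl.length := by
    rw [hook_cons_zero_s17, List.filter_eq_self.2 fun p hp =>
      (decide_eq_true (hpos p (List.mem_cons_of_mem x hp)) : decide (1 ≤ p) = true)]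
    omega
  have hlast : hook (x :: tl) 0 x = 1 := by
    rw [hook_cons_zero_s17, List.filter_eq_nil_iff.2 fun p hp => by simpa using hx_gt p hp]
    simp
  have hstep : ∀ j < x - 1, hook (x :: tl) 0 (j + 1) ≤ hook (x :: tl) 0 (j + 1 + 1) + 2 := by
    intro j hj
    simp only [hook_cons_zero_s17]
    have := htl.nodup.length_filter_le_le_succ (j + 1)
    omega
  obtain ⟨j, hj, hfj⟩ := exists_eq_or_eq_add_one_of_le_add_two
    (fun j => hook (x :: tl) 0 (j + 1)) hstep (v := t) (by simp only [hfirst]; omega)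
    (by simp only [Nat.sub_add_cancel hx, hlast]; omega)
  rcases hfj with h | h
  · exact ht 0 (j + 1) (by simp) (by omega) (by simp; omega) h
  · exact ht' 0 (j + 1) (by simp) (by omega) (by simp; omega) h

theorem isCore_of_getD_zero_add_length_le {l : List ℕ} {s : ℕ} (hl : l.Pairwise (· > ·))
    (hs : l.getD 0 0 + l.length ≤ s) : IsCore l s := by
  intro i j hi hj _ hhook
  have hrow := getD_add_le_getD_zero hl hi
  have hleg : ((l.drop (i + 1)).filter (fun p => decide (j ≤ p))).length ≤ l.length - (i + 1) :=
    (List.length_filter_le _ _).trans List.length_drop.le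
  unfold hook at hhook
  omega

/-- The parts `t - n > ⋯ > t - 2n + 1`: the pointwise largest strictly decreasing list of length `n`
whose first part plus length is at most `t`. -/
def run (t n : ℕ) : List ℕ := (List.range n).map (fun i => t - n - i)

lemma length_run (t n : ℕ) : (run t n).length = n := by simp [run]

lemma run_injective (t : ℕ) : Function.Injective (run t) := fun m n h => by
  simpa only [length_run] using congrArg List.length h

lemma pairwise_run {t n : ℕ} (h : 2 * n ≤ t) : (run t n).Pairwise (· > ·) := by
  simp only [run, List.pairwise_map]
  exact List.pairwise_lt_range.imp_of_mem fun hi hj hij => by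
    simp only [List.mem_range] at hi hj
    omega

lemma pos_of_mem_run {t n : ℕ} (h : 2 * n ≤ t) : ∀ p ∈ run t n, 0 < p := by
  simp only [run, List.mem_map, List.mem_range]
  rintro _ ⟨i, hi, rfl⟩
  omega

lemma getD_zero_add_length_run {t n : ℕ} (h : n ≤ t) :
    (run t n).getD 0 0 + (run t n).length ≤ t := by
  rcases n with _ | n
  · simp [run]
  · simp [run]
    omega

lemma forall₂_le_run {l : List ℕ} {t : ℕ} (hl : l.Pairwise (· > ·))
    (hb : l.getD 0 0 + l.length ≤ t) : List.Forall₂ (· ≤ ·) l (run t l.length) := by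
  refine List.forall₂_of_length_eq_of_get (length_run t _).symm fun i h₁ h₂ => ?_
  have := getD_add_le_getD_zero hl h₁
  rw [List.getD_eq_getElem _ _ h₁] at this
  simp [run]
  omega

theorem List.Forall₂.eq_of_sum_le {M : Type*} [AddCommMonoid M] [PartialOrder M]
    [IsOrderedCancelAddMonoid M] {l₁ l₂ : List M} (h : List.Forall₂ (· ≤ ·) l₁ l₂)
    (hs : l₂.sum ≤ l₁.sum) : l₁ = l₂ := by
  induction h with
  | nil => rfl
  | @cons a b l₁ l₂ hab hl ih =>
    rw [List.sum_cons, List.sum_cons] at hs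
    have hba : b ≤ a := le_of_add_le_add_right (hs.trans (add_le_add le_rfl hl.sum_le_sum))
    obtain rfl := le_antisymm hab hba
    rw [ih (le_of_add_le_add_left hs)]

lemma two_mul_sum_range_sub {R : Type*} [CommRing R] (s : R) (n : ℕ) :
    2 * ∑ i ∈ Finset.range n, (s - i) = n * (2 * s - n + 1) := by
  induction n with
  | zero => simp
  | succ n ih =>
    rw [Finset.sum_range_succ, mul_add, ih]
    push_cast
    ring

lemma six_mul_sum_run {t n : ℕ} (h : 2 * n ≤ t) :
    6 * ((run t n).sum : ℤ) = t * (t + 1) - (t - 3 * n) * (t - 3 * n + 1) := by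
  have hsum : ((run t n).sum : ℤ) = ∑ i ∈ Finset.range n, (((t : ℤ) - n) - i) := by
    have hnat : (run t n).sum = ∑ i ∈ Finset.range n, (t - n - i) := rfl
    rw [hnat, Nat.cast_sum]
    exact Finset.sum_congr rfl fun i hi => by have := Finset.mem_range.1 hi; omega
  rw [hsum, show (6 : ℤ) = 3 * 2 by norm_num, mul_assoc, two_mul_sum_range_sub]
  ring

lemma mul_add_one_lt_six_iff (u : ℤ) : u * (u + 1) < 6 ↔ -2 ≤ u ∧ u ≤ 1 := by
  constructor
  · intro h
    constructor <;> by_contra! h' <;> nlinarith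
  · rintro ⟨h₁, h₂⟩
    interval_cases u <;> norm_num

lemma sum_run_le {t n : ℕ} (h : 2 * n ≤ t) : (run t n).sum ≤ t * (t + 1) / 6 := by
  have hsix := six_mul_sum_run h
  generalize (run t n).sum = S at hsix ⊢
  have hprod : 0 ≤ ((t : ℤ) - 3 * n) * (t - 3 * n + 1) := by
    rcases le_or_gt 0 ((t : ℤ) - 3 * n) with h | h <;> nlinarith
  rw [Nat.le_div_iff_mul_le (by norm_num)]
  zify
  linarith

lemma sum_run_eq_iff {t n : ℕ} (h : 2 * n ≤ t) :
    (run t n).sum = t * (t + 1) / 6 ↔ (t + 1) / 3 ≤ n ∧ n ≤ (t + 2) / 3 := by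
  have hsix := six_mul_sum_run h
  rw [le_antisymm_iff, and_iff_right (sum_run_le h), ← Nat.lt_add_one_iff,
    Nat.div_lt_iff_lt_mul (by norm_num)]
  generalize (run t n).sum = S at hsix ⊢
  zify
  rw [← sub_pos, show ((S : ℤ) + 1) * 6 - t * (t + 1) = 6 - (t - 3 * n) * (t - 3 * n + 1) by
    linarith, sub_pos, mul_add_one_lt_six_iff]
  omega

theorem setOf_maxSize_distinct_core_eq_image_run {t : ℕ} (ht : 2 ≤ t) :
    {l : List ℕ | l.Pairwise (· > ·) ∧ (∀ p ∈ l, 0 < p) ∧ IsCore l t ∧ IsCore l (t + 1) ∧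
      l.sum = t * (t + 1) / 6} = run t '' Set.Icc ((t + 1) / 3) ((t + 2) / 3) := by
  ext l
  constructor
  · rintro ⟨hl, hpos, hcore, hcore', hsum⟩
    have hb := getD_zero_add_length_le_of_isCore hl hpos hcore hcore'
    have h2n : 2 * l.length ≤ t := by have := length_le_getD_zero hl hpos; omega
    have hrun : l = run t l.length :=
      (forall₂_le_run hl hb).eq_of_sum_le (hsum ▸ sum_run_le h2n)
    refine ⟨l.length, (sum_run_eq_iff h2n).1 ?_, hrun.symm⟩
    rw [← hrun, hsum]
  · rintro ⟨n, ⟨hn₁, hn₂⟩, rfl⟩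
    have h2n : 2 * n ≤ t := by omega
    have hb := getD_zero_add_length_run (by omega : n ≤ t)
    exact ⟨pairwise_run h2n, pos_of_mem_run h2n,
      isCore_of_getD_zero_add_length_le (pairwise_run h2n) hb,
      isCore_of_getD_zero_add_length_le (pairwise_run h2n) (by omega),
      (sum_run_eq_iff h2n).2 ⟨hn₁, hn₂⟩⟩

/-- The number of (t, t+1)-core partitions with distinct parts of maximal size ⌊t(t+1)/6⌋
is 2 if t ≡ 1 (mod 3) and 1 otherwise. -/
theorem count_max_size_distinct_core (t : ℕ) (ht : 2 ≤ t) :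
    {l : List ℕ | l.Pairwise (· > ·) ∧ (∀ p ∈ l, 0 < p) ∧
      IsCore l t ∧ IsCore l (t + 1) ∧ l.sum = t * (t + 1) / 6}.ncard =
      if t % 3 = 1 then 2 else 1 := by
  rw [setOf_maxSize_distinct_core_eq_image_run ht,
    Set.ncard_image_of_injective _ (run_injective t), Set.ncard_Icc_nat]
  split_ifs <;> omega
end
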